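/- There is no conjugation C on L²(𝕋) that intertwines M_{z²} and M_{\bar{z}²} and maps a Beurling-type subspace αH² into θH², for any inner functions α and θ. -/

import Mathlib

open MeasureTheory Complex
open scoped Real

noncomputable section

instance : Fact (0 < 2 * Real.pi) := ⟨by positivity⟩

/-- The circle group, modeled as `ℝ / 2πℤ`. -/
abbrev UnitCircle := AddCircle (2 * Real.pi)

/-- Normalized Lebesgue (Haar) measure on the circle. -/
abbrev hm : Measure UnitCircle := AddCircle.haarAddCircle

/-- `L²(𝕋)`. -/
abbrev L2T := Lp ℂ 2 hm

/-- The coordinate function `z` on the circle. -/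
def zz : UnitCircle → ℂ := fun x => fourier 1 x

/-- The Hardy space `H²` inside `L²(𝕋)`: the closed span of `{z^n : n ≥ 0}`. -/
def Hardy : Submodule ℂ L2T :=
  (Submodule.span ℂ (Set.range fun n : ℕ => fourierLp 2 (n : ℤ))).topologicalClosure

/-- even part `f^e(z) = (f(z)+f(-z))/2` (`-z` corresponds to `x + π`). -/
def evenPart (g : UnitCircle → ℂ) : UnitCircle → ℂ :=
  fun x => (g x + g (x + ((Real.pi : ℝ) : UnitCircle))) / 2

/-- odd part `f^o(z) = (f(z)-f(-z))/2`. -/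
def oddPart (g : UnitCircle → ℂ) : UnitCircle → ℂ :=
  fun x => (g x - g (x + ((Real.pi : ℝ) : UnitCircle))) / 2

/-- A conjugation on `L²(𝕋)`: an antilinear involutive map with `⟪Cf, Cg⟫ = ⟪g, f⟫`. -/
structure IsConjugation (C : L2T → L2T) : Prop where
  map_add : ∀ f g, C (f + g) = C f + C g
  map_smul : ∀ (c : ℂ) (f), C (c • f) = (starRingEnd ℂ) c • C f
  involutive : ∀ f, C (C f) = f
  inner_eq : ∀ f g, (inner ℂ (C f) (C g) : ℂ) = inner ℂ g f

/-- the subspace `θ^k · S` of `L²(𝕋)` (given as the span of the set of elements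
a.e. equal to `θ^k f` with `f ∈ S`; this set is already a subspace). -/
def mulSub (θ : UnitCircle → ℂ) (k : ℤ) (S : Submodule ℂ L2T) : Submodule ℂ L2T :=
  Submodule.span ℂ {g : L2T | ∃ f ∈ S,
    (g : UnitCircle → ℂ) =ᵐ[hm] fun x => θ x ^ k * (f : UnitCircle → ℂ) x}

/-- `θ` is inner: `θ ∈ L²` with `|θ| = 1` a.e. and `θ ∈ H²`. -/
def IsInner (θ : UnitCircle → ℂ) : Prop :=
  ∃ hθ : MemLp θ 2 hm, (∀ᵐ x ∂hm, ‖θ x‖ = 1) ∧ hθ.toLp θ ∈ Hardy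

/-- The model space `K_θ = H² ⊖ θH²`. -/
def modelSpace (θ : UnitCircle → ℂ) : Submodule ℂ L2T :=
  Hardy ⊓ (mulSub θ 1 Hardy)ᗮ

/-- The operator `M_{[φ₁,φ₂]}` applied to a function: `φ₁ g^e + φ₂ g^o`. -/
def mul2 (φ1 φ2 g : UnitCircle → ℂ) : UnitCircle → ℂ :=
  fun x => φ1 x * evenPart g x + φ2 x * oddPart g x

/-- `J* f (z) = conj (f (z̄))`; `z̄` corresponds to `-x`. -/
def jstar (f : UnitCircle → ℂ) : UnitCircle → ℂ :=
  fun y => (starRingEnd ℂ) (f (-y))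

/-- Finite Blaschke product with zeros `lam 0, …, lam (n-1)`. -/
def blaschke (n : ℕ) (lam : Fin n → ℂ) : UnitCircle → ℂ :=
  fun x => ∏ k, (lam k - zz x) / (1 - (starRingEnd ℂ) (lam k) * zz x)

/-- The standard basis functions `e_j` of the model space `K_B`. -/
def blaschkeBasis (n : ℕ) (lam : Fin n → ℂ) (j : Fin n) : UnitCircle → ℂ :=
  fun x => (∏ k ∈ Finset.univ.filter (fun k : Fin n => (k : ℕ) < (j : ℕ)),
      (lam k - zz x) / (1 - (starRingEnd ℂ) (lam k) * zz x)) *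
    ((Real.sqrt (1 - ‖lam j‖ ^ 2) : ℂ) / (1 - (starRingEnd ℂ) (lam j) * zz x))

/-!
If `C` intertwines `M_{z²}` with `M_{z̄²}` and maps `αH²` into `θH²`, then, `αH²` being
`M_{z²}`-invariant, `z̄^{2n} · Cα = C(z^{2n} α)` lies in `θH²` for every `n`, so it has no negative
Fourier coefficients. The coefficient of `Cα` at `m` is that of `z̄^{2n} · Cα` at `m - 2n < 0`
for `n` large, hence `Cα = 0`, and then `α = C(Cα) = 0`, which is impossible when `|α| = 1`.
-/

open scoped InnerProductSpace ComplexConjugate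

def IsMulBy (T : L2T →L[ℂ] L2T) (φ : UnitCircle → ℂ) : Prop :=
  ∀ f : L2T, (T f : UnitCircle → ℂ) =ᵐ[hm] fun x => φ x * (f : UnitCircle → ℂ) x

lemma zz_sq (x : UnitCircle) : zz x ^ 2 = fourier 2 x := by
  rw [zz, sq, ← fourier_add]; rfl

lemma conj_zz_sq (x : UnitCircle) : conj (zz x) ^ 2 = fourier (-2) x := by
  rw [← map_pow, zz_sq, ← fourier_neg]

lemma fourierLp_mem_Hardy (n : ℕ) : fourierLp 2 (n : ℤ) ∈ Hardy :=
  Submodule.le_topologicalClosure _ (Submodule.subset_span ⟨n, rfl⟩)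

lemma Hardy_le_orthogonal_singleton {v : L2T}
    (hv : ∀ n : ℕ, ⟪v, fourierLp 2 (n : ℤ)⟫_ℂ = 0) : Hardy ≤ (ℂ ∙ v)ᗮ := by
  refine Submodule.topologicalClosure_minimal _ ?_ (ℂ ∙ v).isClosed_orthogonal
  rw [Submodule.span_le]
  rintro _ ⟨n, rfl⟩
  exact Submodule.mem_orthogonal_singleton_iff_inner_right.mpr (hv n)

lemma inner_fourierLp (f : L2T) (n : ℤ) : ⟪fourierLp 2 n, f⟫_ℂ = fourierCoeff f n := by
  rw [← fourierBasis_repr, fourierBasis.repr_apply_apply, coe_fourierBasis]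

lemma fourierCoeff_eq_zero_of_mem_Hardy {f : L2T} (hf : f ∈ Hardy) {m : ℤ} (hneg : m < 0) :
    fourierCoeff f m = 0 := by
  rw [← inner_fourierLp]
  exact Submodule.mem_orthogonal_singleton_iff_inner_right.mp
    (Hardy_le_orthogonal_singleton (fun n => orthonormal_fourier.2 (by omega)) hf)

lemma inner_toLp_eq_integral {w : UnitCircle → ℂ} (hw : MemLp w 2 hm) (f : L2T) :
    ⟪hw.toLp w, f⟫_ℂ = ∫ x, conj (w x) * (f : UnitCircle → ℂ) x ∂hm := by
  rw [MeasureTheory.L2.inner_def]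
  refine integral_congr_ae ?_
  filter_upwards [hw.coeFn_toLp] with x hx
  rw [RCLike.inner_apply, hx, mul_comm]

lemma fourierCoeff_eq_zero_of_ae_eq_mul {θ : UnitCircle → ℂ} (hθ : MemLp θ 2 hm)
    (hθH : hθ.toLp θ ∈ Hardy) {f g : L2T} (hf : f ∈ Hardy)
    (hg : (g : UnitCircle → ℂ) =ᵐ[hm] fun x => θ x * (f : UnitCircle → ℂ) x)
    {m : ℤ} (hneg : m < 0) : fourierCoeff g m = 0 := by
  -- `ĝ(m) = ⟪w, f⟫` for `w = conj (z^{-m} θ)`, and `⟪w, z^n⟫ = θ̂(m - n)` vanishes for `n ≥ 0`.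
  set w : UnitCircle → ℂ := fun x => conj (fourier (-m) x * θ x)
  have hw : MemLp w 2 hm := by
    refine hθ.of_le (RCLike.continuous_conj.comp_aestronglyMeasurable
      ((fourier (-m)).continuous.aestronglyMeasurable.mul hθ.1)) (.of_forall fun x => ?_)
    rw [RCLike.norm_conj, norm_mul, fourier_apply, Circle.norm_coe, one_mul]
  have hgw : fourierCoeff g m = ⟪hw.toLp w, f⟫_ℂ := by
    rw [fourierCoeff_congr_ae hg, inner_toLp_eq_integral]
    refine integral_congr_ae (.of_forall fun x => ?_)
    simp only [w, Complex.conj_conj, smul_eq_mul, mul_assoc]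
  have hwn (n : ℕ) : ⟪hw.toLp w, fourierLp 2 (n : ℤ)⟫_ℂ = fourierCoeff θ (m - n) := by
    rw [inner_toLp_eq_integral, fourierCoeff]
    refine integral_congr_ae ?_
    filter_upwards [coeFn_fourierLp 2 (n : ℤ)] with x hx
    rw [hx, neg_sub, sub_eq_add_neg, fourier_add]
    simp only [w, Complex.conj_conj, smul_eq_mul]
    ring
  rw [hgw]
  refine Submodule.mem_orthogonal_singleton_iff_inner_right.mp
    (Hardy_le_orthogonal_singleton (fun n => ?_) hf)
  rw [hwn, ← fourierCoeff_congr_ae hθ.coeFn_toLp]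
  exact fourierCoeff_eq_zero_of_mem_Hardy hθH (by omega)

lemma fourierCoeff_eq_zero_of_mem_mulSub_Hardy {θ : UnitCircle → ℂ} (hθ : MemLp θ 2 hm)
    (hθH : hθ.toLp θ ∈ Hardy) {g : L2T} (hg : g ∈ mulSub θ 1 Hardy) {m : ℤ} (hneg : m < 0) :
    fourierCoeff g m = 0 := by
  have hle : mulSub θ 1 Hardy ≤ (ℂ ∙ fourierLp 2 m)ᗮ := by
    refine Submodule.span_le.mpr fun g ⟨f, hf, hgf⟩ => ?_
    rw [SetLike.mem_coe, Submodule.mem_orthogonal_singleton_iff_inner_right, inner_fourierLp]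
    exact fourierCoeff_eq_zero_of_ae_eq_mul hθ hθH hf (by simpa using hgf) hneg
  rw [← inner_fourierLp]
  exact Submodule.mem_orthogonal_singleton_iff_inner_right.mp (hle hg)

lemma toLp_mem_mulSub_one_Hardy {θ : UnitCircle → ℂ} (hθ : MemLp θ 2 hm) :
    hθ.toLp θ ∈ mulSub θ 1 Hardy := by
  refine Submodule.subset_span ⟨fourierLp 2 0, fourierLp_mem_Hardy 0, ?_⟩
  filter_upwards [hθ.coeFn_toLp, coeFn_fourierLp 2 (0 : ℤ)] with x h1 h2
  rw [h1, h2, fourier_zero, zpow_one, mul_one]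

lemma toLp_ne_zero_of_norm_eq_one {θ : UnitCircle → ℂ} (hθ : MemLp θ 2 hm)
    (h1 : ∀ᵐ x ∂hm, ‖θ x‖ = 1) : hθ.toLp θ ≠ 0 := by
  intro h0
  have hae : θ =ᵐ[hm] 0 := (hθ.coeFn_toLp.symm.trans (by rw [h0]; exact Lp.coeFn_zero _ _ _))
  have : (ae hm).NeBot := ae_neBot.2 (IsProbabilityMeasure.ne_zero hm)
  obtain ⟨x, hx1, hx0⟩ := (h1.and hae).exists
  simp [hx0] at hx1

lemma Lp_eq_zero_of_fourierCoeff_eq_zero {f : L2T} (hf : ∀ m, fourierCoeff f m = 0) : f = 0 := by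
  refine fourierBasis.repr.map_eq_zero_iff.mp (lp.ext (funext fun m => ?_))
  rw [fourierBasis_repr, hf]; rfl

namespace IsMulBy

variable {T : L2T →L[ℂ] L2T}

lemma fourierCoeff_apply {k : ℤ} (hT : IsMulBy T (fourier k)) (f : L2T) (m : ℤ) :
    fourierCoeff (T f) m = fourierCoeff f (m - k) := by
  rw [fourierCoeff_congr_ae (hT f), fourierCoeff, fourierCoeff]
  congr 1; ext x
  rw [smul_eq_mul, smul_eq_mul, ← mul_assoc, ← fourier_add, neg_sub, sub_eq_add_neg, add_comm]

lemma fourierCoeff_iterate {k : ℤ} (hT : IsMulBy T (fourier k)) (n : ℕ) (f : L2T) (m : ℤ) :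
    fourierCoeff (T^[n] f) m = fourierCoeff f (m - n * k) := by
  induction n generalizing m with
  | zero => simp
  | succ n ih =>
    rw [Function.iterate_succ_apply', hT.fourierCoeff_apply, ih]
    push_cast; ring_nf

lemma apply_fourierLp {k : ℤ} (hT : IsMulBy T (fourier k)) (n : ℤ) :
    T (fourierLp 2 n) = fourierLp 2 (n + k) := by
  apply Lp.ext
  filter_upwards [hT (fourierLp 2 n), coeFn_fourierLp 2 n, coeFn_fourierLp 2 (n + k)]
    with x h1 h2 h3
  rw [h1, h2, h3, fourier_add, mul_comm]

lemma mapsTo_Hardy {k : ℕ} (hT : IsMulBy T (fourier k)) : Set.MapsTo T Hardy Hardy := by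
  have hle : Hardy ≤ Hardy.comap (T : L2T →ₗ[ℂ] L2T) := by
    refine Submodule.topologicalClosure_minimal _ ?_
      ((Submodule.isClosed_topologicalClosure _).preimage T.continuous)
    rw [Submodule.span_le]
    rintro _ ⟨n, rfl⟩
    rw [SetLike.mem_coe, Submodule.mem_comap, ContinuousLinearMap.coe_coe, hT.apply_fourierLp]
    exact_mod_cast fourierLp_mem_Hardy (n + k)
  exact fun f hf => hle hf

lemma mapsTo_mulSub {φ : UnitCircle → ℂ} (hT : IsMulBy T φ) {S : Submodule ℂ L2T}
    (hS : Set.MapsTo T S S) (θ : UnitCircle → ℂ) (k : ℤ) :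
    Set.MapsTo T (mulSub θ k S) (mulSub θ k S) := by
  have hle : mulSub θ k S ≤ (mulSub θ k S).comap (T : L2T →ₗ[ℂ] L2T) := by
    refine Submodule.span_le.mpr fun g ⟨f, hf, hgf⟩ => Submodule.subset_span ⟨T f, hS hf, ?_⟩
    filter_upwards [hT g, hT f, hgf] with x h1 h2 h3
    rw [ContinuousLinearMap.coe_coe, h1, h2, h3]; ring
  exact fun f hf => hle hf

lemma eq_zero_of_iterate {k : ℕ} (hk : 0 < k) (hT : IsMulBy T (fourier (-k))) {g : L2T}
    (hg : ∀ n : ℕ, ∀ m < 0, fourierCoeff (T^[n] g) m = 0) : g = 0 := by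
  refine Lp_eq_zero_of_fourierCoeff_eq_zero fun m => ?_
  -- `ĝ(m)` is the coefficient of `T^[n] g` at `m - n k`, which is negative for `n > m`.
  set n := m.toNat + 1
  have hneg : m - n * k < 0 := by
    have hnk : (n : ℤ) ≤ n * k := le_mul_of_one_le_right (by positivity) (by exact_mod_cast hk)
    have hm := Int.self_le_toNat m
    omega
  simpa [hT.fourierCoeff_iterate] using hg n _ hneg

end IsMulBy

lemma IsConjugation.eq_zero_of_apply_eq_zero {C : L2T → L2T} (hC : IsConjugation C) {f : L2T}
    (hf : C f = 0) : f = 0 := by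
  have hC0 : C 0 = 0 := by simpa using hC.map_smul 0 0
  rw [← hC.involutive f, hf, hC0]

/-- There is no conjugation intertwining `M_{z²}` and `M_{z̄²}` that maps a
Beurling-type subspace `αH²` into `θH²`, for any inner functions `α, θ`. -/
theorem stmt_18 (α θ : UnitCircle → ℂ) (hα : IsInner α) (hθ : IsInner θ)
    (Mz2 Mzb2 : L2T →L[ℂ] L2T)
    (hMz2 : ∀ f : L2T, (Mz2 f : UnitCircle → ℂ) =ᵐ[hm]
      fun x => zz x ^ 2 * (f : UnitCircle → ℂ) x)
    (hMzb2 : ∀ f : L2T, (Mzb2 f : UnitCircle → ℂ) =ᵐ[hm]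
      fun x => (starRingEnd ℂ) (zz x) ^ 2 * (f : UnitCircle → ℂ) x) :
    ¬ ∃ C : L2T → L2T, IsConjugation C ∧ (∀ f, C (Mz2 f) = Mzb2 (C f)) ∧
      ∀ f ∈ mulSub α 1 Hardy, C f ∈ mulSub θ 1 Hardy := by
  rintro ⟨C, hC, hcomm, hmap⟩
  obtain ⟨hα2, hα1, -⟩ := hα
  obtain ⟨hθ2, -, hθH⟩ := hθ
  have hz : IsMulBy Mz2 (fourier ((2 : ℕ) : ℤ)) := fun f => by
    simpa only [zz_sq, Nat.cast_ofNat] using hMz2 f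
  have hzb : IsMulBy Mzb2 (fourier (-(2 : ℕ) : ℤ)) := fun f => by
    simpa only [conj_zz_sq, Nat.cast_ofNat] using hMzb2 f
  have hαH := (hz.mapsTo_mulSub hz.mapsTo_Hardy α 1).iterate
  refine toLp_ne_zero_of_norm_eq_one hα2 hα1 (hC.eq_zero_of_apply_eq_zero ?_)
  refine hzb.eq_zero_of_iterate two_pos fun n m hneg => ?_
  rw [← (Function.Semiconj.iterate_right hcomm n) (hα2.toLp α)]
  exact fourierCoeff_eq_zero_of_mem_mulSub_Hardy hθ2 hθH
    (hmap _ (hαH n (toLp_mem_mulSub_one_Hardy hα2))) hneg
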